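/- Let G be a finite connected graph and A, B disjoint, linked, saturated subsets of V(G) such that N(A ∪ B) is not a clique. If there exists a forbidden pair {u, v} ∈ MFS(A, B) with u ≡ v (u and v belong to a common intersecting sequence of components of G − N[A ∪ B]), then A and B are not separable by monophonic half-spaces. -/

import Mathlib

open Classical

variable {V : Type*}

namespace Paper

def mInterval (G : SimpleGraph V) (u v : V) : Set V :=
  {w | ∃ p : G.Walk u v, p.IsPath ∧ p.toSubgraph.IsInduced ∧ w ∈ p.support}

def MConvex (G : SimpleGraph V) (C : Set V) : Prop :=
  ∀ u ∈ C, ∀ v ∈ C, mInterval G u v ⊆ C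

def mHull (G : SimpleGraph V) (X : Set V) : Set V :=
  ⋂₀ {C | MConvex G C ∧ X ⊆ C}

def mIntervalSet (G : SimpleGraph V) (Z : Set V) : Set V :=
  ⋃ u ∈ Z, ⋃ v ∈ Z, mInterval G u v

def Sep (G : SimpleGraph V) (A B : Set V) : Prop :=
  ∃ H : Set V, MConvex G H ∧ MConvex G Hᶜ ∧ A ⊆ H ∧ B ⊆ Hᶜ

def nbhd (G : SimpleGraph V) (X : Set V) : Set V :=
  {v | v ∉ X ∧ ∃ x ∈ X, G.Adj x v}

def cnbhd (G : SimpleGraph V) (X : Set V) : Set V := X ∪ nbhd G X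

def front (G : SimpleGraph V) (X Y : Set V) : Set V := X ∩ cnbhd G Y

def IsClique (G : SimpleGraph V) (K : Set V) : Prop :=
  ∀ u ∈ K, ∀ v ∈ K, u ≠ v → G.Adj u v

def shadow (G : SimpleGraph V) (A B : Set V) : Set V :=
  {v | (mHull G (B ∪ {v}) ∩ A).Nonempty}

def Forbidden (G : SimpleGraph V) (A B X : Set V) : Prop :=
  X ⊆ (A ∪ B)ᶜ ∧ (mHull G X ∩ A).Nonempty ∧ (mHull G X ∩ B).Nonempty

def MFS (G : SimpleGraph V) (A B : Set V) : Set (Set V) :=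
  {X | Forbidden G A B X ∧ ∀ Y, Y ⊂ X → ¬ Forbidden G A B Y}

def presat (G : SimpleGraph V) (A B : Set V) : Set V :=
  mHull G (shadow G A B ∪ ⋃ X ∈ MFS G A B, ⋂ x ∈ X, mHull G (A ∪ {x}))

def Linked (G : SimpleGraph V) (A B : Set V) : Prop :=
  ∃ a ∈ A, ∃ b ∈ B, G.Adj a b

def Saturated (G : SimpleGraph V) (A B : Set V) : Prop :=
  A = presat G A B ∧ B = presat G B A

def IsCompOf (G : SimpleGraph V) (W S : Set V) : Prop :=
  S.Nonempty ∧ S ⊆ W ∧ (G.induce S).Connected ∧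
    ∀ T, S ⊆ T → T ⊆ W → (G.induce T).Connected → T = S

def Eqv (G : SimpleGraph V) (A B : Set V) (u v : V) : Prop :=
  u = v ∨ ∃ L : List (Set V), L ≠ [] ∧
    (∀ S ∈ L, IsCompOf G (cnbhd G (A ∪ B))ᶜ S) ∧
    List.Chain' (fun S T => (nbhd G S ∩ nbhd G T).Nonempty) L ∧
    (∃ S₀ ∈ L.head?, u ∈ cnbhd G S₀) ∧
    (∃ Sₖ ∈ L.getLast?, v ∈ cnbhd G Sₖ)

end Paper

open Paper

/-!
Let the half-space `H` contain `A` while `Hᶜ` contains `B`, and let `a ∈ A`, `b ∈ B` be adjacent.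
The key point is that no edge `pq` with `q ∉ N[A ∪ B]` crosses `H`; say `p ∈ H ∌ q`. Since `q` has
no neighbour in `A ∪ B`, convexity of `Hᶜ` along `b - p - q` gives `b ≁ p`. If `a ∼ p`, then
`b - a - p` is an induced path, so `p` lies in the shadow of `A`, which is `A` by saturation,
although `q ∉ N(A)`. Otherwise go from `a` to `b`, through `Hᶜ` (convex sets of a connected graph
are connected) to `q`, and on to `p`: an induced `a`–`p` path inside this walk has its second vertex
outside `H`, against the convexity of `H`. Hence each `N[S]`, for a component `S` of
`G - N[A ∪ B]`, lies on one side of `H`, and so does the union of an intersecting sequence of them.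
So `u ≡ v` puts `u` and `v` on one side, and `cl {u, v}` misses `A` or `B`, contradicting
`{u, v} ∈ MFS(A, B)`.
-/

namespace SimpleGraph.Walk

variable {G : SimpleGraph V} {u v : V}

theorem isChordless_of_length_eq_dist (p : G.Walk u v) (hp : p.length = G.dist u v) :
    p.IsChordless := by
  have key : ∀ i j, i < j → j ≤ p.length → G.Adj (p.getVert i) (p.getVert j) →
      s(p.getVert i, p.getVert j) ∈ p.edges := by
    intro i j hij hj hadj
    obtain rfl | hj' : j = i + 1 ∨ i + 2 ≤ j := by omega
    · exact adj_toSubgraph_iff_mem_edges.mp (p.toSubgraph_adj_getVert hj)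
    · have := G.dist_le ((p.take i).append (cons hadj (p.drop j)))
      simp only [length_append, take_length, length_cons, drop_length] at this
      omega
  refine isChordless_iff_forall_mem_edges.mpr fun a b ha hb hab => ?_
  obtain ⟨i, rfl, hi⟩ := mem_support_iff_exists_getVert.mp ha
  obtain ⟨j, rfl, hj⟩ := mem_support_iff_exists_getVert.mp hb
  rcases lt_trichotomy i j with hij | rfl | hij
  · exact key i j hij hj hab
  · exact absurd rfl hab.ne
  · rw [Sym2.eq_swap]
    exact key j i hij hi hab.symm

/-- Take a shortest walk in the subgraph induced by the vertices of `p`. -/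
theorem exists_isPath_isChordless_support_subset (p : G.Walk u v) :
    ∃ q : G.Walk u v, q.IsPath ∧ q.IsChordless ∧ ∀ x ∈ q.support, x ∈ p.support := by
  let s : Set V := {x | x ∈ p.support}
  obtain ⟨r, hr⟩ := (p.induce s fun _ h => h).reachable.exists_walk_length_eq_dist
  have hsupp : (r.map (Embedding.induce s).toHom).support = r.support.map (↑) :=
    support_map _ _
  have hedges : (r.map (Embedding.induce s).toHom).edges = r.edges.map (Sym2.map (↑)) :=
    edges_map _ _
  refine ⟨r.map (Embedding.induce s).toHom,
    (r.isPath_of_length_eq_dist hr).map Subtype.val_injective,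
    isChordless_iff_forall_mem_edges.mpr fun a b ha hb hab => ?_, fun x hx => ?_⟩
  · obtain ⟨a, ha', rfl⟩ := List.mem_map.mp (hsupp ▸ ha)
    obtain ⟨b, hb', rfl⟩ := List.mem_map.mp (hsupp ▸ hb)
    exact hedges ▸ List.mem_map_of_mem
      ((r.isChordless_of_length_eq_dist hr).mem_edges ha' hb' hab)
  · obtain ⟨x, -, rfl⟩ := List.mem_map.mp (hsupp ▸ hx)
    exact x.2

end SimpleGraph.Walk

namespace Paper

open SimpleGraph

variable {G : SimpleGraph V}

theorem subset_mHull (G : SimpleGraph V) (X : Set V) : X ⊆ mHull G X :=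
  fun _ hx _ hC => hC.2 hx

theorem mConvex_mHull (G : SimpleGraph V) (X : Set V) : MConvex G (mHull G X) :=
  fun _ hx _ hy _ hw C hC => hC.1 _ (hx C hC) _ (hy C hC) hw

theorem mHull_subset {X C : Set V} (hC : MConvex G C) (hXC : X ⊆ C) : mHull G X ⊆ C :=
  fun _ hx => hx C ⟨hC, hXC⟩

theorem not_subset_of_mHull_inter_nonempty {X C D : Set V} (hXD : (mHull G X ∩ D).Nonempty)
    (hC : MConvex G C) (hDC : D ⊆ Cᶜ) : ¬ X ⊆ C := fun hXC =>
  let ⟨_, hx, hxD⟩ := hXD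
  hDC hxD (mHull_subset hC hXC hx)

theorem mem_mInterval_of_mem_support {u v w : V} {p : G.Walk u v} (hp : p.IsPath)
    (hc : p.IsChordless) (hw : w ∈ p.support) : w ∈ mInterval G u v :=
  ⟨p, hp, Walk.isInduced_toSubgraph.mpr hc, hw⟩

theorem MConvex.eq_or_adj_of_walk {C : Set V} (hC : MConvex G C) {x y : V} (hx : x ∈ C)
    (hy : y ∈ C) (p : G.Walk x y) (hp : ∀ z ∈ p.support, z ≠ x → z ≠ y → z ∉ C) :
    x = y ∨ G.Adj x y := by
  by_contra! h
  obtain ⟨q, hq, hqc, hqp⟩ := p.exists_isPath_isChordless_support_subset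
  have hsnd : G.Adj x q.snd := q.adj_snd fun hnil => h.1 hnil.eq
  refine hp q.snd (hqp _ (q.getVert_mem_support 1)) hsnd.ne.symm (fun he => h.2 (he ▸ hsnd)) ?_
  exact hC x hx y hy (mem_mInterval_of_mem_support hq hqc (q.getVert_mem_support 1))

theorem MConvex.exists_walk_support_subset (hG : G.Preconnected) {C : Set V} (hC : MConvex G C)
    {x y : V} (hx : x ∈ C) (hy : y ∈ C) : ∃ p : G.Walk x y, ∀ z ∈ p.support, z ∈ C := by
  obtain ⟨p, hp⟩ := (hG x y).exists_walk_length_eq_dist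
  exact ⟨p, fun z hz => hC x hx y hy <| mem_mInterval_of_mem_support
    (p.isPath_of_length_eq_dist hp) (p.isChordless_of_length_eq_dist hp) hz⟩

theorem shadow_subset_presat (A B : Set V) : shadow G A B ⊆ presat G A B :=
  Set.subset_union_left.trans (subset_mHull _ _)

theorem Saturated.shadow_subset_left {A B : Set V} (hS : Saturated G A B) :
    shadow G A B ⊆ A :=
  (shadow_subset_presat A B).trans hS.1.symm.subset

theorem Saturated.shadow_subset_right {A B : Set V} (hS : Saturated G A B) :
    shadow G B A ⊆ B :=
  (shadow_subset_presat B A).trans hS.2.symm.subset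

theorem ne_and_not_adj_of_notMem_cnbhd {X : Set V} {x q : V} (hq : q ∉ cnbhd G X)
    (hx : x ∈ X) : x ≠ q ∧ ¬ G.Adj x q :=
  ⟨fun h => hq (Or.inl (h ▸ hx)), fun hxq => hq (Or.inr ⟨fun h => hq (Or.inl h), x, hx, hxq⟩)⟩

theorem mem_of_adj_of_notMem_cnbhd (hG : G.Preconnected) {A B H : Set V}
    (hH : MConvex G H) (hHc : MConvex G Hᶜ) (hAH : A ⊆ H) (hBH : B ⊆ Hᶜ)
    (hshadow : shadow G A B ⊆ A) {a b : V} (ha : a ∈ A) (hb : b ∈ B) (hab : G.Adj a b)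
    {p q : V} (hpq : G.Adj p q) (hp : p ∈ H) (hq : q ∉ cnbhd G (A ∪ B)) : q ∈ H := by
  by_contra hqH
  have hqA := ne_and_not_adj_of_notMem_cnbhd hq (Or.inl ha)
  have hqB := ne_and_not_adj_of_notMem_cnbhd hq (Or.inr hb)
  have hbp : ¬ G.Adj b p := fun hbp => by
    refine (hHc.eq_or_adj_of_walk (hBH hb) hqH (.cons hbp (.cons hpq .nil)) ?_).elim hqB.1 hqB.2
    simp only [Walk.support_cons, Walk.support_nil, List.mem_cons, List.not_mem_nil, or_false]
    rintro z (rfl | rfl | rfl) hzb hzq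
    exacts [absurd rfl hzb, fun h => h hp, absurd rfl hzq]
  by_cases hap : G.Adj a p
  · have haHull : a ∈ mHull G (B ∪ {p}) := by
      by_contra haHull
      refine ((mConvex_mHull G (B ∪ {p})).eq_or_adj_of_walk
        (subset_mHull _ _ (Set.mem_union_left _ hb)) (subset_mHull _ _ (Set.mem_union_right _ rfl))
        (.cons hab.symm (.cons hap .nil)) ?_).elim (fun h => hBH hb (h ▸ hp)) hbp
      simp only [Walk.support_cons, Walk.support_nil, List.mem_cons, List.not_mem_nil, or_false]
      rintro z (rfl | rfl | rfl) hzb hzp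
      exacts [absurd rfl hzb, haHull, absurd rfl hzp]
    have hpA : p ∈ A := hshadow ⟨a, haHull, ha⟩
    exact (ne_and_not_adj_of_notMem_cnbhd hq (Or.inl hpA)).2 hpq
  · obtain ⟨W, hW⟩ := hHc.exists_walk_support_subset hG (hBH hb) hqH
    refine (hH.eq_or_adj_of_walk (hAH ha) hp (.cons hab (W.concat hpq.symm)) ?_).elim
      (fun h => hqA.2 (h ▸ hpq)) hap
    simp only [Walk.support_cons, Walk.support_concat, List.mem_cons, List.mem_append,
      List.not_mem_nil, or_false]
    rintro z (rfl | hz | rfl) hza hzp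
    exacts [absurd rfl hza, hW z hz, absurd rfl hzp]

theorem mem_iff_of_adj_of_notMem_cnbhd (hG : G.Preconnected) {A B H : Set V}
    (hH : MConvex G H) (hHc : MConvex G Hᶜ) (hAH : A ⊆ H) (hBH : B ⊆ Hᶜ)
    (hshA : shadow G A B ⊆ A) (hshB : shadow G B A ⊆ B) {a b : V} (ha : a ∈ A) (hb : b ∈ B)
    (hab : G.Adj a b) {p q : V} (hpq : G.Adj p q) (hq : q ∉ cnbhd G (A ∪ B)) :
    p ∈ H ↔ q ∈ H := by
  refine ⟨fun hp => mem_of_adj_of_notMem_cnbhd hG hH hHc hAH hBH hshA ha hb hab hpq hp hq,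
    fun hqH => ?_⟩
  by_contra hp
  rw [← compl_compl H] at hAH
  exact mem_of_adj_of_notMem_cnbhd hG hHc (by rwa [compl_compl]) hBH hAH hshB hb ha hab.symm
    hpq hp (by rwa [Set.union_comm]) hqH

theorem IsCompOf.mem_iff_of_mem_cnbhd {W S H : Set V} (hS : IsCompOf G Wᶜ S)
    (hedge : ∀ p q, G.Adj p q → q ∉ W → (p ∈ H ↔ q ∈ H)) {x y : V} (hx : x ∈ cnbhd G S)
    (hy : y ∈ cnbhd G S) : x ∈ H ↔ y ∈ H := by
  obtain ⟨-, hSW, hSconn, -⟩ := hS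
  have along_walk : ∀ (s t : S), (G.induce S).Walk s t → (s.1 ∈ H ↔ t.1 ∈ H) := by
    intro s t w
    induction w with
    | nil => rfl
    | cons h _ ih => exact (hedge _ _ h (hSW (Subtype.prop _))).trans ih
  have near : ∀ x ∈ cnbhd G S, ∃ s ∈ S, x ∈ H ↔ s ∈ H := by
    rintro x (hx | ⟨-, s, hs, hsx⟩)
    exacts [⟨x, hx, Iff.rfl⟩, ⟨s, hs, hedge x s hsx.symm (hSW hs)⟩]
  obtain ⟨s, hs, hxs⟩ := near x hx
  obtain ⟨t, ht, hyt⟩ := near y hy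
  obtain ⟨w⟩ := hSconn.preconnected ⟨s, hs⟩ ⟨t, ht⟩
  exact hxs.trans ((along_walk _ _ w).trans hyt.symm)

theorem mem_iff_of_isChain {H : Set V} :
    ∀ {L : List (Set V)}, (∀ S ∈ L, ∀ x ∈ cnbhd G S, ∀ y ∈ cnbhd G S, (x ∈ H ↔ y ∈ H)) →
      L.IsChain (fun S T => (nbhd G S ∩ nbhd G T).Nonempty) → ∀ {u v : V},
      (∃ S ∈ L.head?, u ∈ cnbhd G S) → (∃ T ∈ L.getLast?, v ∈ cnbhd G T) → (u ∈ H ↔ v ∈ H)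
  | [], _, _, _, _, ⟨_, hS, _⟩, _ => by simp at hS
  | [S], hL, _, _, _, ⟨_, rfl, hu⟩, ⟨_, rfl, hv⟩ => hL S (by simp) _ hu _ hv
  | S :: T :: L, hL, hchain, _, _, ⟨_, rfl, hu⟩, hv => by
    obtain ⟨⟨z, hzS, hzT⟩, hchain⟩ := List.isChain_cons_cons.mp hchain
    refine (hL S (by simp) _ hu z (Or.inr hzS)).trans ?_
    exact mem_iff_of_isChain (fun R hR => hL R (List.mem_cons_of_mem _ hR)) hchain
      ⟨T, rfl, Or.inr hzT⟩ hv

theorem Eqv.mem_iff {A B H : Set V} {u v : V} (h : Eqv G A B u v)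
    (hedge : ∀ p q, G.Adj p q → q ∉ cnbhd G (A ∪ B) → (p ∈ H ↔ q ∈ H)) : u ∈ H ↔ v ∈ H := by
  rcases h with rfl | ⟨L, -, hcomp, hchain, hu, hv⟩
  · rfl
  · exact mem_iff_of_isChain (fun S hS _ hx _ hy => (hcomp S hS).mem_iff_of_mem_cnbhd hedge hx hy)
      hchain hu hv

end Paper

theorem stmt_17_general (G : SimpleGraph V) (hG : G.Connected)
    (A B : Set V) (hL : Linked G A B)
    (hS : Saturated G A B)
    (u v : V) (hm : ({u, v} : Set V) ∈ MFS G A B)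
    (heq : Eqv G A B u v) :
    ¬ Sep G A B := by
  rintro ⟨H, hH, hHc, hAH, hBH⟩
  obtain ⟨a, ha, b, hb, hab⟩ := hL
  obtain ⟨-, hmA, hmB⟩ := hm.1
  have huv : u ∈ H ↔ v ∈ H := heq.mem_iff fun _ _ hpq hq =>
    mem_iff_of_adj_of_notMem_cnbhd hG.preconnected hH hHc hAH hBH hS.shadow_subset_left
      hS.shadow_subset_right ha hb hab hpq hq
  by_cases hu : u ∈ H
  · exact not_subset_of_mHull_inter_nonempty hmB hH hBH (Set.pair_subset hu (huv.mp hu))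
  · exact not_subset_of_mHull_inter_nonempty hmA hHc (by rwa [compl_compl])
      (Set.pair_subset hu (mt huv.mpr hu))

theorem stmt_17 [Fintype V] (G : SimpleGraph V) (hG : G.Connected)
    (A B : Set V) (hL : Linked G A B) (hd : Disjoint A B)
    (hS : Saturated G A B) (hnc : ¬ IsClique G (nbhd G (A ∪ B)))
    (u v : V) (hne : u ≠ v) (hm : ({u, v} : Set V) ∈ MFS G A B)
    (heq : Eqv G A B u v) :
    ¬ Sep G A B :=
  stmt_17_general G hG A B hL hS u v hm heq
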